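/- arXiv:1907.10089 — 4 statements merged into one kernel-verified Lean document; each statement's English description precedes it below -/
import Mathlib

section
/- In the graded ring ℤ[c_1, c_2, ...] / I, where I is the ideal generated by the elements S_s := c_s^2 + 2·∑_{i=1}^{s} (-1)^i c_{s+i} c_{s-i} for all s > k (with conventions c_0 = 1, c_m = 0 for m < 0), the reduction modulo 2 is isomorphic as a (ℤ/2)-algebra to (ℤ/2)[c_1,...,c_k] ⊗ (ℤ/2)[c_{k+1}, c_{k+2}, ...]/⟨c_{k+1}^2, c_{k+2}^2, ...⟩. -/
open MvPolynomial TensorProduct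

/-- `c_m` as an element of `ℤ[c_1, c_2, …]`, encoded in `MvPolynomial ℕ ℤ` with the
variable `X j` representing `c_{j+1}`; `c_0 = 1`. -/
noncomputable def cC (m : ℕ) : MvPolynomial ℕ ℤ := if m = 0 then 1 else X (m - 1)

/-- The relation `S^s : c_s^2 + 2 ∑_{i=1}^s (-1)^i c_{s+i} c_{s-i}`. -/
noncomputable def relC (s : ℕ) : MvPolynomial ℕ ℤ :=
  cC s ^ 2 + 2 * ∑ i ∈ Finset.Icc 1 s, ((-1) ^ i : MvPolynomial ℕ ℤ) * cC (s + i) * cC (s - i)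

/-- The ideal generated by the relations `S^s` for `s > k`. -/
noncomputable def relIdealC (k : ℕ) : Ideal (MvPolynomial ℕ ℤ) :=
  Ideal.span {p : MvPolynomial ℕ ℤ | ∃ s : ℕ, k < s ∧ p = relC s}

/-!
Reducing mod 2 commutes with taking the quotient, so the left side is `(ℤ/2)[c_1, c_2, …]`
modulo the reductions of the `S_s`. The correction term of `S_s` carries the factor 2, so
`S_s` reduces to `c_s^2`. Splitting the variables into `c_1, …, c_k` and the rest turns the
quotient by `⟨c_s^2 : s > k⟩` into the stated tensor product.
-/

namespace MvPolynomial

variable {R : Type*} [CommRing R] {σ τ : Type*}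

noncomputable def algebraTensorQuotientAlgEquiv (A : Type*) [CommRing A] [Algebra R A]
    (I : Ideal (MvPolynomial σ R)) :
    A ⊗[R] (MvPolynomial σ R ⧸ I) ≃ₐ[A] MvPolynomial σ A ⧸ I.map (map (algebraMap R A)) :=
  (Algebra.TensorProduct.tensorQuotientEquiv A (MvPolynomial σ R) A I).trans <|
    Ideal.quotientEquivAlg _ _ (algebraTensorAlgEquiv R A) <| by
      have h : (algebraTensorAlgEquiv (σ := σ) R A :
            A ⊗[R] MvPolynomial σ R →+* MvPolynomial σ A).comp
          (Algebra.TensorProduct.includeRight (R := R) (A := A) (B := MvPolynomial σ R) :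
            MvPolynomial σ R →+* A ⊗[R] MvPolynomial σ R) =
          map (algebraMap R A) :=
        RingHom.ext fun p ↦ by simp
      rw [← Ideal.map_coe Algebra.TensorProduct.includeRight, Ideal.map_map, h]

lemma tensorEquivSum_comp_includeRight :
    (tensorEquivSum R σ τ R).toAlgHom.comp Algebra.TensorProduct.includeRight =
      rename Sum.inr :=
  algHom_ext fun i ↦ by simp

noncomputable def tensorQuotientEquivSum (J : Ideal (MvPolynomial τ R)) :
    MvPolynomial σ R ⊗[R] (MvPolynomial τ R ⧸ J) ≃ₐ[R]
      MvPolynomial (σ ⊕ τ) R ⧸ J.map (rename Sum.inr) :=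
  (Algebra.TensorProduct.tensorQuotientEquiv R (MvPolynomial τ R) (MvPolynomial σ R) J).trans <|
    Ideal.quotientEquivAlg _ _ (tensorEquivSum R σ τ R) <| by
      have h : (tensorEquivSum R σ τ R :
            MvPolynomial σ R ⊗[R] MvPolynomial τ R →+* MvPolynomial (σ ⊕ τ) R).comp
          (Algebra.TensorProduct.includeRight (R := R) (A := MvPolynomial σ R)
            (B := MvPolynomial τ R) : MvPolynomial τ R →+* MvPolynomial σ R ⊗[R] MvPolynomial τ R) =
          (rename Sum.inr : MvPolynomial τ R →ₐ[R] MvPolynomial (σ ⊕ τ) R) :=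
        RingHom.ext fun p ↦ DFunLike.congr_fun tensorEquivSum_comp_includeRight p
      rw [← Ideal.map_coe Algebra.TensorProduct.includeRight, Ideal.map_map, h, Ideal.map_coe]

end MvPolynomial

lemma map_relC_succ {A : Type*} [CommRing A] [CharP A 2] (j : ℕ) :
    map (algebraMap ℤ A) (relC (j + 1)) = X j ^ 2 := by
  have hc : cC (j + 1) = X j := by simp [cC]
  rw [relC, hc, map_add, map_mul, map_pow, map_X, map_ofNat,
    CharTwo.two_eq_zero (R := MvPolynomial ℕ A), zero_mul, add_zero]

lemma relIdealC_eq_span_range (k : ℕ) :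
    relIdealC k = Ideal.span (Set.range fun j ↦ relC (k + j + 1)) := by
  refine congrArg Ideal.span (Set.ext fun p ↦ ⟨?_, ?_⟩)
  · rintro ⟨s, hs, rfl⟩
    exact ⟨s - k - 1, congrArg relC (by omega)⟩
  · rintro ⟨j, rfl⟩
    exact ⟨k + j + 1, by omega, rfl⟩

lemma map_relIdealC_rename_eq {A : Type*} [CommRing A] [CharP A 2] (k : ℕ) :
    ((relIdealC k).map (map (algebraMap ℤ A))).map (rename (finSumNatEquiv k).symm) =
      (Ideal.span (Set.range fun j : ℕ ↦ (X j : MvPolynomial ℕ A) ^ 2)).map (rename Sum.inr) := by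
  simp only [relIdealC_eq_span_range, Ideal.map_span, ← Set.range_comp]
  refine congrArg Ideal.span (congrArg Set.range (funext fun j ↦ ?_))
  have he : (finSumNatEquiv k).symm (k + j) = .inr j := (finSumNatEquiv k).symm_apply_apply (.inr j)
  simp only [Function.comp_apply]
  rw [map_relC_succ, map_pow, rename_X, he, map_pow, rename_X]

theorem stmt3_general (k : ℕ) :
    Nonempty
      ((ZMod 2 ⊗[ℤ] (MvPolynomial ℕ ℤ ⧸ relIdealC k)) ≃ₐ[ZMod 2]
        (MvPolynomial (Fin k) (ZMod 2) ⊗[ZMod 2]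
          (MvPolynomial ℕ (ZMod 2) ⧸
            Ideal.span (Set.range fun j : ℕ => (X j : MvPolynomial ℕ (ZMod 2)) ^ 2)))) :=
  ⟨(algebraTensorQuotientAlgEquiv (ZMod 2) (relIdealC k)).trans <|
    (Ideal.quotientEquivAlg _ _ (renameEquiv (ZMod 2) (finSumNatEquiv k).symm)
      (map_relIdealC_rename_eq k).symm).trans (tensorQuotientEquivSum _).symm⟩

/-- The reduction mod 2 of `ℤ[c_1,c_2,…]/⟨S^s : s>k⟩` is isomorphic, as a
`ℤ/2`-algebra, to `(ℤ/2)[c_1,…,c_k] ⊗ (ℤ/2)[c_{k+1},…]/⟨c_{k+1}^2, c_{k+2}^2, …⟩`.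
In the second tensor factor the variable `X j` represents `c_{k+1+j}`. -/
theorem stmt3 (k : ℕ) (hk : 1 ≤ k) :
    Nonempty
      ((ZMod 2 ⊗[ℤ] (MvPolynomial ℕ ℤ ⧸ relIdealC k)) ≃ₐ[ZMod 2]
        (MvPolynomial (Fin k) (ZMod 2) ⊗[ZMod 2]
          (MvPolynomial ℕ (ZMod 2) ⧸
            Ideal.span (Set.range fun j : ℕ => (X j : MvPolynomial ℕ (ZMod 2)) ^ 2)))) :=
  stmt3_general k
end

section
/- Let k ≥ 1 and let B = ℤ[c_1, c_2, ...] / ⟨c_s^2 + 2∑_{i=1}^s (-1)^i c_{s+i}c_{s-i} : s > k⟩ (with c_0 = 1, c_m = 0 for m < 0). Then the ring homomorphism ξ: ℤ[e_1, ..., e_k] → B defined by e_i ↦ c_i^2 + 2∑_{j=1}^i (-1)^j c_{i+j}c_{i-j} is injective. -/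
/-!
Send `c_m` to the elementary symmetric polynomial `e_m(x_1, …, x_k)`. Comparing coefficients of
`t^{2s}` in `∏ (1 + x_i t) · ∏ (1 - x_i t) = ∏ (1 - x_i² t²)` gives
`∑_{a+b=2s} (-1)^b e_a e_b = (-1)^s e_s(x_1², …, x_k²)`, and pairing the terms `a = s ± i` on
the left turns this into `S^s(e) = e_s(x_1², …, x_k²)`, which vanishes for `s > k`. So the
specialization factors through `B`, and the composite `ℤ[e_1, …, e_k] → B → ℤ[x_1, …, x_k]` sends
`e_i` to `e_i(x_1², …, x_k²)`; it is injective because the `e_i` are algebraically independent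
and `x_i ↦ x_i²` is injective.
-/

open MvPolynomial

open Finset

namespace Multiset

variable {ι R : Type*}

theorem esymm_zero_right [CommSemiring R] (m : Multiset R) : m.esymm 0 = 1 := by
  simp [esymm, powersetCard_zero_left]

theorem esymm_cons_succ [CommSemiring R] (a : R) (m : Multiset R) (n : ℕ) :
    (a ::ₘ m).esymm (n + 1) = m.esymm (n + 1) + a * m.esymm n := by
  simp [esymm, Multiset.map_map, Multiset.sum_map_mul_left]

theorem esymm_map_neg [CommRing R] (m : Multiset ι) (f : ι → R) (n : ℕ) :
    (m.map fun i => -f i).esymm n = (-1) ^ n * (m.map f).esymm n := by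
  rw [← esymm_neg, Multiset.map_map]
  rfl

theorem coeff_prod_map_one_add_C_mul_X [CommSemiring R] (m : Multiset ι) (f : ι → R) (n : ℕ) :
    (m.map fun i => 1 + Polynomial.C (f i) * Polynomial.X).prod.coeff n = (m.map f).esymm n := by
  induction m using Multiset.induction generalizing n with
  | empty => cases n <;> simp [esymm, Polynomial.coeff_one, powersetCard_zero_right]
  | cons a m ih =>
    cases n <;> simp [add_mul, mul_assoc, Polynomial.coeff_X_mul, esymm_cons_succ, ih,
      esymm_zero_right]

theorem sum_antidiagonal_neg_one_pow_mul_esymm_mul_esymm [CommRing R] (m : Multiset R) (s : ℕ) :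
    ∑ p ∈ HasAntidiagonal.antidiagonal (2 * s), (-1) ^ p.2 * m.esymm p.1 * m.esymm p.2
      = (-1) ^ s * (m.map (· ^ 2)).esymm s := by
  have hfactor : (m.map fun r => 1 + Polynomial.C r * Polynomial.X).prod *
      (m.map fun r => 1 + Polynomial.C (-r) * Polynomial.X).prod
      = Polynomial.expand R 2 (m.map fun r => 1 + Polynomial.C (-r ^ 2) * Polynomial.X).prod := by
    rw [← Multiset.prod_map_mul, map_multiset_prod, Multiset.map_map]
    refine congrArg _ (Multiset.map_congr rfl fun r _ => ?_)
    simp only [Function.comp_apply, _root_.map_add, map_one, map_mul, map_neg, map_pow,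
      Polynomial.expand_C, Polynomial.expand_X]
    ring
  have hcoeff := congrArg (Polynomial.coeff · (2 * s)) hfactor
  simp only [Polynomial.coeff_mul, Polynomial.coeff_expand_mul' two_pos,
    coeff_prod_map_one_add_C_mul_X, esymm_map_neg, esymm_neg, Multiset.map_id'] at hcoeff
  rw [← hcoeff]
  exact Finset.sum_congr rfl fun p _ => by ring

end Multiset

def quadraticRelation {R : Type*} [CommRing R] (E : ℕ → R) (s : ℕ) : R :=
  E s ^ 2 + 2 * ∑ i ∈ Icc 1 s, (-1) ^ i * E (s + i) * E (s - i)

theorem sum_antidiagonal_two_mul_eq_neg_one_pow_mul_quadraticRelation {R : Type*} [CommRing R]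
    (E : ℕ → R) (s : ℕ) :
    ∑ p ∈ antidiagonal (2 * s), (-1) ^ p.2 * E p.1 * E p.2
      = (-1) ^ s * quadraticRelation E s := by
  set g : ℕ → R := fun u => (-1) ^ (2 * s - u) * E u * E (2 * s - u)
  have hlow : ∑ u ∈ Ico 0 s, g u = ∑ i ∈ Icc 1 s, g (s - i) := by
    rw [← Ico_add_one_right_eq_Icc, sum_Ico_reflect g 1 le_rfl]
    simp
  have hhigh : ∑ u ∈ Ico (s + 1) (2 * s + 1), g u = ∑ i ∈ Icc 1 s, g (s + i) := by
    rw [← Ico_add_one_right_eq_Icc, sum_Ico_add, add_comm 1 s, add_right_comm, two_mul]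
  have hpair : ∀ i ∈ Icc 1 s,
      g (s - i) + g (s + i) = (-1) ^ s * (2 * ((-1) ^ i * E (s + i) * E (s - i))) := by
    intro i hi
    obtain ⟨t, rfl⟩ : ∃ t, s = t + i := ⟨s - i, by simp at hi; omega⟩
    simp only [g, show t + i - i = t by omega, show 2 * (t + i) - t = t + i + i by omega,
      show 2 * (t + i) - (t + i + i) = t by omega]
    have h : (-1 : R) ^ (2 * i) = 1 := Even.neg_one_pow ⟨i, two_mul i⟩
    linear_combination (-(E t * E (t + i + i) * (-1) ^ t)) * h
  calc ∑ p ∈ antidiagonal (2 * s), (-1) ^ p.2 * E p.1 * E p.2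
      = ∑ u ∈ Ico 0 s, g u + g s + ∑ u ∈ Ico (s + 1) (2 * s + 1), g u := by
        rw [Nat.sum_antidiagonal_eq_sum_range_succ (fun a b => (-1) ^ b * E a * E b),
          range_eq_Ico, ← sum_Ico_consecutive _ (Nat.zero_le s) (by omega : s ≤ 2 * s + 1),
          sum_eq_sum_Ico_succ_bot (by omega : s < 2 * s + 1), add_assoc]
    _ = (-1) ^ s * quadraticRelation E s := by
        rw [hlow, hhigh, add_right_comm, ← sum_add_distrib, sum_congr rfl hpair, ← mul_sum,
          ← mul_sum, quadraticRelation]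
        simp only [g, show 2 * s - s = s by omega]
        ring

namespace MvPolynomial

variable (σ R : Type*) [Fintype σ]

theorem esymm_eq_zero_of_card_lt [CommSemiring R] {n : ℕ} (h : Fintype.card σ < n) :
    esymm σ R n = 0 := by
  rw [esymm, powersetCard_eq_empty.mpr (by simpa using h), sum_empty]

theorem expand_two_esymm_eq_multiset_esymm [CommSemiring R] (n : ℕ) :
    expand 2 (esymm σ R n) = ((univ.val.map X).map (· ^ 2)).esymm n := by
  rw [Multiset.map_map]
  exact aeval_esymm_eq_multiset_esymm σ R n _

theorem quadraticRelation_esymm [CommRing R] (s : ℕ) :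
    quadraticRelation (esymm σ R) s = expand 2 (esymm σ R s) := by
  have h := (sum_antidiagonal_two_mul_eq_neg_one_pow_mul_quadraticRelation (esymm σ R) s).symm
  rw [esymm_eq_multiset_esymm, Multiset.sum_antidiagonal_neg_one_pow_mul_esymm_mul_esymm,
    ← esymm_eq_multiset_esymm, ← expand_two_esymm_eq_multiset_esymm] at h
  exact ((isUnit_neg_one (α := MvPolynomial σ R)).pow s).mul_left_cancel h

theorem aeval_esymm_succ_injective [CommRing R] {n : ℕ} (hn : n ≤ Fintype.card σ) :
    Function.Injective (aeval (R := R) fun i : Fin n => esymm σ R (i + 1)) := by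
  have h := Subtype.val_injective.comp (esymmAlgHom_injective (σ := σ) R hn)
  simpa only [Function.comp_def, esymmAlgHom_apply] using h

end MvPolynomial

section Specialization

variable {σ R : Type*} [Fintype σ] [CommRing R]

theorem aeval_esymm_succ_cC (m : ℕ) :
    aeval (fun j => esymm σ R (j + 1)) (cC m) = esymm σ R m := by
  cases m <;> simp [cC, esymm_zero]

theorem aeval_esymm_succ_relC (s : ℕ) :
    aeval (fun j => esymm σ R (j + 1)) (relC s) = expand 2 (esymm σ R s) := by
  rw [← quadraticRelation_esymm]
  simp [relC, quadraticRelation, aeval_esymm_succ_cC]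

theorem relIdealC_le_ker_aeval_esymm_succ (k : ℕ) :
    relIdealC k ≤ RingHom.ker (aeval (R := ℤ) fun j => esymm (Fin k) R (j + 1)) := by
  rw [relIdealC, Ideal.span_le]
  rintro _ ⟨s, hs, rfl⟩
  rw [SetLike.mem_coe, RingHom.mem_ker, aeval_esymm_succ_relC,
    esymm_eq_zero_of_card_lt _ _ (by simpa using hs), map_zero]

end Specialization

noncomputable def esymmLift (k : ℕ) :
    (MvPolynomial ℕ ℤ ⧸ relIdealC k) →ₐ[ℤ] MvPolynomial (Fin k) ℤ :=
  Ideal.Quotient.liftₐ (relIdealC k) (aeval fun j => esymm (Fin k) ℤ (j + 1))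
    fun _ ha => relIdealC_le_ker_aeval_esymm_succ k ha

theorem esymmLift_comp_aeval_relC (k : ℕ) :
    (esymmLift k).comp (aeval fun i : Fin k => Ideal.Quotient.mk (relIdealC k) (relC (i + 1)))
      = (expand 2).comp (aeval fun i : Fin k => esymm (Fin k) ℤ (i + 1)) :=
  algHom_ext fun i => by
    rw [AlgHom.comp_apply, AlgHom.comp_apply, aeval_X, aeval_X]
    exact aeval_esymm_succ_relC _

/-- The source variable `X i` (`i : Fin k`) stands for `e_{i+1}`. -/
theorem stmt5_general (k : ℕ) :
    Function.Injective
      (MvPolynomial.aeval (R := ℤ)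
        (fun i : Fin k =>
          Ideal.Quotient.mk (relIdealC k)
            (cC ((i : ℕ) + 1) ^ 2 +
              2 * ∑ j ∈ Finset.Icc 1 ((i : ℕ) + 1),
                ((-1) ^ j : MvPolynomial ℕ ℤ) * cC ((i : ℕ) + 1 + j) * cC ((i : ℕ) + 1 - j))) :
        MvPolynomial (Fin k) ℤ → _) := by
  have hinj :
      Function.Injective ((expand 2).comp (aeval fun i : Fin k => esymm (Fin k) ℤ (i + 1))) :=
    (expand_injective two_pos).comp (aeval_esymm_succ_injective _ ℤ (Fintype.card_fin k).ge)
  rw [← esymmLift_comp_aeval_relC, AlgHom.coe_comp] at hinj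
  exact hinj.of_comp

/-- Theorem A, algebraic form: the ring homomorphism
`ξ : ℤ[e_1,…,e_k] → B = ℤ[c_1,c_2,…]/⟨S^s : s>k⟩` with
`e_i ↦ c_i^2 + 2 ∑_{j=1}^i (-1)^j c_{i+j} c_{i-j}` is injective.
The variable `X i` of the source (for `i : Fin k`) represents `e_{i+1}`. -/
theorem stmt5 (k : ℕ) (hk : 1 ≤ k) :
    Function.Injective
      (MvPolynomial.aeval (R := ℤ)
        (fun i : Fin k =>
          Ideal.Quotient.mk (relIdealC k)
            (cC ((i : ℕ) + 1) ^ 2 +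
              2 * ∑ j ∈ Finset.Icc 1 ((i : ℕ) + 1),
                ((-1) ^ j : MvPolynomial ℕ ℤ) * cC ((i : ℕ) + 1 + j) * cC ((i : ℕ) + 1 - j))) :
        MvPolynomial (Fin k) ℤ → _) :=
  stmt5_general k
end

section
/- Let R be a graded commutative ring which in each graded degree is a finitely generated abelian group, and suppose R is not finitely generated as a ring. Then there is no surjective ring homomorphism from a finitely generated ℂ-algebra onto ℂ ⊗_ℤ R that is compatible with a fixed family of surjections onto finitely generated quotients requiring unboundedly many generators. Concretely: the polynomial ring ℂ[e_1, ..., e_k] admits no surjective graded ℂ-algebra homomorphism onto ℂ[c_1, c_2, ...]/⟨c_s^2 + 2∑_{i=1}^s (-1)^i c_{s+i}c_{s-i} : s > k⟩ ⊗_ℤ ℂ. -/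
/-!
Send `c_{2n+1}` to `ε e_n` and `c_{2n}` to `0` in the trivial square-zero extension
`R ⊕ ε R^(ℕ)`. Every product of two positive-degree classes then vanishes, so `S^s` maps to
`±2 c_{2s} ↦ 0`, and the map factors through `R ⊗ ℤ[c]/⟨S^s : s > k⟩`, with the `ε`-parts of
its image spanning all of `R^(ℕ)`. On the other hand, the `ε`-parts of the image of an algebra
map out of a finitely generated algebra `A` span a finitely generated module: they are controlled
by the images of the generators, because `ε`-parts of products are linear combinations of
`ε`-parts of the factors. As `R^(ℕ)` is not finitely generated, no such `A` surjects.
-/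

open MvPolynomial TensorProduct

namespace TrivSqZeroExt

variable {R M : Type*} [CommRing R] [AddCommGroup M] [Module R M] [Module Rᵐᵒᵖ M]
  [IsCentralScalar R M]

def subalgebraSndMem (W : Submodule R M) : Subalgebra R (TrivSqZeroExt R M) where
  carrier := {x | x.snd ∈ W}
  mul_mem' {x y} hx hy := by
    rw [Set.mem_ofPred_eq, snd_mul, op_smul_eq_smul]
    exact W.add_mem (W.smul_mem _ hy) (W.smul_mem _ hx)
  add_mem' hx hy := W.add_mem hx hy
  algebraMap_mem' r := by simp [algebraMap_eq_inl]

theorem mem_subalgebraSndMem {W : Submodule R M} {x : TrivSqZeroExt R M} :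
    x ∈ subalgebraSndMem W ↔ x.snd ∈ W :=
  Iff.rfl

theorem span_snd_range_fg {A : Type*} [CommRing A] [Algebra R A] [Algebra.FiniteType R A]
    (f : A →ₐ[R] TrivSqZeroExt R M) : (Submodule.span R (Set.range fun a => (f a).snd)).FG := by
  obtain ⟨s, hs⟩ := Algebra.FiniteType.out (R := R) (A := A)
  suffices h : Submodule.span R (Set.range fun a => (f a).snd) =
      Submodule.span R ((fun a => (f a).snd) '' s) from
    h ▸ Submodule.fg_span (s.finite_toSet.image _)
  refine le_antisymm (Submodule.span_le.mpr ?_) (Submodule.span_mono (Set.image_subset_range _ _))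
  rintro _ ⟨a, rfl⟩
  have hadj : f a ∈ Algebra.adjoin R (f '' s) := by
    rw [← AlgHom.map_adjoin, hs]
    exact ⟨a, trivial, rfl⟩
  refine mem_subalgebraSndMem.mp (Algebra.adjoin_le ?_ hadj)
  rintro _ ⟨b, hb, rfl⟩
  exact Submodule.subset_span ⟨b, hb, rfl⟩

end TrivSqZeroExt

section ChernClasses

variable (R : Type*) [CommRing R]

noncomputable def oddChernWeight (j : ℕ) : ℕ →₀ R :=
  if Even j then Finsupp.single (j / 2) 1 else 0

noncomputable def chernSqZeroHom : MvPolynomial ℕ ℤ →ₐ[ℤ] TrivSqZeroExt R (ℕ →₀ R) :=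
  aeval fun j => TrivSqZeroExt.inr (oddChernWeight R j)

variable {R}

theorem chernSqZeroHom_cC {m : ℕ} (hm : m ≠ 0) :
    chernSqZeroHom R (cC m) = TrivSqZeroExt.inr (oddChernWeight R (m - 1)) := by
  simp [cC, hm, chernSqZeroHom]

theorem chernSqZeroHom_cC_two_mul {s : ℕ} (hs : s ≠ 0) : chernSqZeroHom R (cC (2 * s)) = 0 := by
  have hodd : ¬ Even (2 * s - 1) := by rw [Nat.not_even_iff_odd, Nat.odd_iff]; omega
  rw [chernSqZeroHom_cC (by omega), oddChernWeight, if_neg hodd, TrivSqZeroExt.inr_zero]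

theorem chernSqZeroHom_relC {s : ℕ} (hs : s ≠ 0) : chernSqZeroHom R (relC s) = 0 := by
  have hsq : chernSqZeroHom R (cC s ^ 2) = 0 := by
    rw [map_pow, chernSqZeroHom_cC hs, sq, TrivSqZeroExt.inr_mul_inr]
  have hterm : ∀ i ∈ Finset.Icc 1 s,
      chernSqZeroHom R (((-1) ^ i : MvPolynomial ℕ ℤ) * cC (s + i) * cC (s - i)) = 0 := by
    intro i hi
    obtain ⟨-, his⟩ := Finset.mem_Icc.mp hi
    rw [map_mul, map_mul, mul_assoc]
    rcases his.eq_or_lt with rfl | hlt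
    · rw [← two_mul, chernSqZeroHom_cC_two_mul hs, zero_mul, mul_zero]
    · rw [chernSqZeroHom_cC (by omega), chernSqZeroHom_cC (by omega),
        TrivSqZeroExt.inr_mul_inr, mul_zero]
  rw [relC, map_add, hsq, map_mul, map_sum, Finset.sum_eq_zero hterm, mul_zero, add_zero]

theorem relIdealC_le_ker_chernSqZeroHom (k : ℕ) : relIdealC k ≤ RingHom.ker (chernSqZeroHom R) :=
  Ideal.span_le.mpr fun _ ⟨s, hks, hp⟩ => hp ▸ chernSqZeroHom_relC (by omega)

variable (R)

noncomputable def chernSqZeroTensorHom (k : ℕ) :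
    R ⊗[ℤ] (MvPolynomial ℕ ℤ ⧸ relIdealC k) →ₐ[R] TrivSqZeroExt R (ℕ →₀ R) :=
  Algebra.TensorProduct.lift (Algebra.ofId R _)
    (Ideal.Quotient.liftₐ _ (chernSqZeroHom R)
      fun _ ha => RingHom.mem_ker.mp (relIdealC_le_ker_chernSqZeroHom k ha))
    fun _ _ => Commute.all _ _

theorem chernSqZeroTensorHom_one_tmul_X_two_mul (k n : ℕ) :
    chernSqZeroTensorHom R k (1 ⊗ₜ Ideal.Quotient.mk _ (X (2 * n))) =
      TrivSqZeroExt.inr (Finsupp.single n 1) := by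
  rw [chernSqZeroTensorHom, Algebra.TensorProduct.lift_tmul, map_one, one_mul,
    ← Ideal.Quotient.mkₐ_eq_mk ℤ, ← AlgHom.comp_apply, Ideal.Quotient.liftₐ_comp, chernSqZeroHom,
    aeval_X, oddChernWeight, if_pos (even_two_mul n), Nat.mul_div_cancel_left n two_pos]

theorem span_snd_range_chernSqZeroTensorHom (k : ℕ) :
    Submodule.span R (Set.range fun x => (chernSqZeroTensorHom R k x).snd) = ⊤ := by
  rw [eq_top_iff, ← Finsupp.basisSingleOne.span_eq, Submodule.span_le]
  rintro _ ⟨n, rfl⟩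
  refine Submodule.subset_span ⟨1 ⊗ₜ Ideal.Quotient.mk _ (X (2 * n)), ?_⟩
  simp [chernSqZeroTensorHom_one_tmul_X_two_mul]

theorem not_surjective_algHom_tensor_quotient_relIdealC [Nontrivial R] {A : Type*} [CommRing A]
    [Algebra R A] [Algebra.FiniteType R A] (k : ℕ)
    (φ : A →ₐ[R] R ⊗[ℤ] (MvPolynomial ℕ ℤ ⧸ relIdealC k)) : ¬ Function.Surjective φ := by
  intro hφ
  have hfg := TrivSqZeroExt.span_snd_range_fg ((chernSqZeroTensorHom R k).comp φ)
  have hrange : (Set.range fun a => ((chernSqZeroTensorHom R k).comp φ a).snd) =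
      Set.range fun x => (chernSqZeroTensorHom R k x).snd :=
    hφ.range_comp fun x => (chernSqZeroTensorHom R k x).snd
  rw [hrange, span_snd_range_chernSqZeroTensorHom] at hfg
  have hfin : Module.Finite R (ℕ →₀ R) := ⟨hfg⟩
  rcases Module.finite_finsupp_self_iff.mp hfin with h | h
  exacts [not_subsingleton R h, not_finite ℕ]

end ChernClasses

theorem stmt12_general (k : ℕ)
    (φ : MvPolynomial (Fin k) ℂ →ₐ[ℂ] (ℂ ⊗[ℤ] (MvPolynomial ℕ ℤ ⧸ relIdealC k))) :
    ¬ Function.Surjective φ :=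
  not_surjective_algHom_tensor_quotient_relIdealC ℂ k φ

/-- Remark 3.1: there is no surjective `ℂ`-algebra homomorphism from the
polynomial ring `ℂ[e_1,…,e_k]` onto the complexified stable cohomology ring
`ℍ*(IG_k, ℂ) = (ℤ[c_1,c_2,…]/⟨S^s : s>k⟩) ⊗_ℤ ℂ`. -/
theorem stmt12 (k : ℕ) (hk : 1 ≤ k)
    (φ : MvPolynomial (Fin k) ℂ →ₐ[ℂ] (ℂ ⊗[ℤ] (MvPolynomial ℕ ℤ ⧸ relIdealC k))) :
    ¬ Function.Surjective φ :=
  stmt12_general k φ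
end

section
/- Let f: ℤ[e_1,...,e_k] → R be a graded ring homomorphism (deg e_i = 4i) to a graded ring R whose graded pieces are finitely generated free ℤ-modules. If the induced map (ℤ/2)[e_1,...,e_k] → (ℤ/2) ⊗_ℤ R sends the e_i to elements whose images are algebraically independent over ℤ/2, then f is injective and ℂ ⊗ f: ℂ[e_1,...,e_k] → ℂ ⊗_ℤ R is injective. -/
/-!
A graded ring with free pieces is a free, hence torsion-free, `ℤ`-module. A kernel element `p`
of `f` reduces mod `n` to a kernel element of `MvPolynomial σ (ZMod n) → ZMod n ⊗[ℤ] R`, which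
is zero by algebraic independence; so `p = n • q`, and `q` lies in the kernel again because `R`
has no `ℤ`-torsion. Hence `p` is divisible by every power of `n`, so `p = 0`. Injectivity survives
`ℂ ⊗[ℤ] -` because `ℂ` is flat over `ℤ`.
-/

open TensorProduct MvPolynomial

theorem DirectSum.Decomposition.moduleFree_int {ι M : Type*} [DecidableEq ι] [AddCommGroup M]
    (𝒜 : ι → AddSubgroup M) [DirectSum.Decomposition 𝒜] [∀ i, Module.Free ℤ (𝒜 i)] :
    Module.Free ℤ M :=
  Module.Free.of_equiv (DirectSum.decomposeAddEquiv 𝒜).symm.toIntLinearEquiv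

namespace MvPolynomial

variable {σ : Type*}

theorem eq_zero_of_forall_C_pow_dvd {n : ℕ} (hn : 1 < n) {p : MvPolynomial σ ℤ}
    (h : ∀ m : ℕ, C ((n : ℤ) ^ m) ∣ p) : p = 0 := by
  ext i
  have hdvd := (C_dvd_iff_dvd_coeff _ p).mp (h (p.coeff i).natAbs) i
  refine Int.eq_zero_of_dvd_of_natAbs_lt_natAbs hdvd ?_
  simpa [Int.natAbs_pow] using Nat.lt_pow_self hn

theorem C_dvd_of_map_intCast_zmod_eq_zero {n : ℕ} {p : MvPolynomial σ ℤ}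
    (h : map (Int.castRingHom (ZMod n)) p = 0) : C (n : ℤ) ∣ p := by
  have hp : p ∈ RingHom.ker (map (Int.castRingHom (ZMod n))) := h
  rwa [ker_map, ZMod.ker_intCastRingHom, Ideal.map_span, Set.image_singleton,
    Ideal.mem_span_singleton] at hp

variable {R : Type*} [CommRing R]

theorem aeval_map_intCast_zmod (n : ℕ) (f : MvPolynomial σ ℤ →+* R) (p : MvPolynomial σ ℤ) :
    aeval (fun i => (Algebra.TensorProduct.includeRight : R →ₐ[ℤ] ZMod n ⊗[ℤ] R) (f (X i)))
        (map (Int.castRingHom (ZMod n)) p) =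
      Algebra.TensorProduct.includeRight (f p) := by
  have hφ := aeval_unique
    ((Algebra.TensorProduct.includeRight : R →ₐ[ℤ] ZMod n ⊗[ℤ] R).comp f.toIntAlgHom)
  rw [← algebraMap_int_eq, aeval_map_algebraMap]
  exact (DFunLike.congr_fun hφ p).symm

theorem injective_of_algebraicIndependent_zmod [Module.IsTorsionFree ℤ R] {n : ℕ} (hn : 1 < n)
    (f : MvPolynomial σ ℤ →+* R)
    (hind : AlgebraicIndependent (ZMod n)
      (fun i => (Algebra.TensorProduct.includeRight : R →ₐ[ℤ] ZMod n ⊗[ℤ] R) (f (X i)))) :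
    Function.Injective f := by
  have hreg : IsSMulRegular R (n : ℤ) :=
    Module.IsTorsionFree.isSMulRegular (IsRegular.of_ne_zero (by omega))
  have hdescent : ∀ m : ℕ, ∀ p, f p = 0 → C ((n : ℤ) ^ m) ∣ p := by
    intro m
    induction m with
    | zero => simp
    | succ m ih =>
      intro p hp
      obtain ⟨q, rfl⟩ : C (n : ℤ) ∣ p := by
        refine C_dvd_of_map_intCast_zmod_eq_zero (hind ?_)
        rw [aeval_map_intCast_zmod, hp, map_zero, map_zero]
      have hq : f q = 0 := hreg <| by
        show (n : ℤ) • f q = (n : ℤ) • 0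
        rwa [smul_zero, ← map_zsmul, smul_eq_C_mul]
      rw [pow_succ', C_mul]
      exact mul_dvd_mul_left _ (ih q hq)
  exact (injective_iff_map_eq_zero f).mpr fun p hp =>
    eq_zero_of_forall_C_pow_dvd hn fun m => hdescent m p hp

end MvPolynomial

theorem stmt19_general (k : ℕ) (R : Type*) [CommRing R] (𝒜 : ℕ → AddSubgroup R) [GradedRing 𝒜]
    (hfree : ∀ n, Module.Free ℤ (𝒜 n))
    (f : MvPolynomial (Fin k) ℤ →+* R)
    (hind : AlgebraicIndependent (ZMod 2)
      (fun i : Fin k =>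
        (Algebra.TensorProduct.includeRight : R →ₐ[ℤ] ZMod 2 ⊗[ℤ] R)
          (f (MvPolynomial.X i)))) :
    Function.Injective f ∧
      Function.Injective
        (LinearMap.lTensor ℂ f.toAddMonoidHom.toIntLinearMap :
          ℂ ⊗[ℤ] MvPolynomial (Fin k) ℤ →ₗ[ℤ] ℂ ⊗[ℤ] R) := by
  have : Module.Free ℤ R := DirectSum.Decomposition.moduleFree_int 𝒜
  have hinj := MvPolynomial.injective_of_algebraicIndependent_zmod one_lt_two f hind
  exact ⟨hinj, Module.Flat.lTensor_preserves_injective_linearMap _ hinj⟩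

/-- let `f : ℤ[e_1,…,e_k] → R` be a graded ring homomorphism (`deg e_i = 4i`,
expressed by `f(e_i) ∈ 𝒜 (4i)`) to a graded ring `R` whose graded pieces are finitely
generated free `ℤ`-modules.  If the images of the `e_i` under the induced map
`(ℤ/2)[e_1,…,e_k] → (ℤ/2) ⊗_ℤ R` are algebraically independent over `ℤ/2`, then `f` is
injective and `ℂ ⊗ f` is injective. -/
theorem stmt19 (k : ℕ) (R : Type*) [CommRing R] (𝒜 : ℕ → AddSubgroup R) [GradedRing 𝒜]
    (hfree : ∀ n, Module.Free ℤ (𝒜 n)) (hfg : ∀ n, Module.Finite ℤ (𝒜 n))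
    (f : MvPolynomial (Fin k) ℤ →+* R)
    (hgraded : ∀ i : Fin k, f (MvPolynomial.X i) ∈ 𝒜 (4 * ((i : ℕ) + 1)))
    (hind : AlgebraicIndependent (ZMod 2)
      (fun i : Fin k =>
        (Algebra.TensorProduct.includeRight : R →ₐ[ℤ] ZMod 2 ⊗[ℤ] R)
          (f (MvPolynomial.X i)))) :
    Function.Injective f ∧
      Function.Injective
        (LinearMap.lTensor ℂ f.toAddMonoidHom.toIntLinearMap :
          ℂ ⊗[ℤ] MvPolynomial (Fin k) ℤ →ₗ[ℤ] ℂ ⊗[ℤ] R) :=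
  stmt19_general k R 𝒜 hfree f hind
end
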